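/- arXiv:1903.00808 — 3 statements merged into one kernel-verified Lean document; each statement's English description precedes it below -/
import Mathlib

section
/- Let m be a positive integer, T > 0, and let Υ : [0,T] → (m×m real matrices) be Lebesgue measurable with Υ_t symmetric for every t and with uniformly bounded entries. If ∫₀ᵀ u(t)ᵀ Υ_t u(t) dt ≥ 0 for every bounded Lebesgue-measurable function u : [0,T] → ℝ^m, then for almost every t ∈ [0,T] the matrix Υ_t is positive semidefinite. -/
open Matrix MeasureTheory

/-- Necessity argument: if `∫₀ᵀ uᵀΥu dt ≥ 0` for every bounded measurable `u`,
then `Υ_t` is positive semidefinite for almost every `t ∈ [0,T]`. -/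
theorem ae_posSemidef_of_nonneg_quadratic_integral
    (m : ℕ) (hm : 0 < m) (T : ℝ) (hT : 0 < T)
    (Υ : ℝ → Matrix (Fin m) (Fin m) ℝ)
    (hΥmeas : ∀ i j, Measurable fun t => Υ t i j)
    (hΥsym : ∀ t, (Υ t)ᵀ = Υ t)
    (hΥbd : ∃ Cb : ℝ, ∀ t i j, |Υ t i j| ≤ Cb)
    (hnonneg : ∀ u : ℝ → Fin m → ℝ, Measurable u → (∃ Cu : ℝ, ∀ t, ‖u t‖ ≤ Cu) →
      0 ≤ ∫ t in Set.Icc (0:ℝ) T, (u t) ⬝ᵥ (Υ t *ᵥ u t)) :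
    ∀ᵐ t ∂(volume.restrict (Set.Icc (0:ℝ) T)), (Υ t).PosSemidef := by
  obtain ⟨Cb, hCb⟩ := hΥbd
  -- Step 1: for every fixed vector v, a.e. t ∈ [0,T] we have 0 ≤ vᵀ Υ_t v.
  have key : ∀ v : Fin m → ℝ,
      ∀ᵐ t ∂(volume.restrict (Set.Icc (0:ℝ) T)), 0 ≤ v ⬝ᵥ (Υ t *ᵥ v) := by
    intro v
    set q : ℝ → ℝ := fun t => v ⬝ᵥ (Υ t *ᵥ v) with hq_def
    have hq : Measurable q := by
      simp only [hq_def, dotProduct, mulVec]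
      exact Finset.measurable_sum _ fun i _ =>
        ((Finset.measurable_sum _ fun j _ => (hΥmeas i j).mul_const (v j)).const_mul (v i))
    have hqbd : ∀ t, |q t| ≤ ∑ i : Fin m, ∑ j : Fin m, |v i| * Cb * |v j| := by
      intro t
      simp only [hq_def, dotProduct, mulVec]
      calc |∑ i, v i * ∑ j, Υ t i j * v j| ≤ ∑ i, |v i * ∑ j, Υ t i j * v j| :=
            Finset.abs_sum_le_sum_abs _ _
        _ ≤ ∑ i : Fin m, ∑ j : Fin m, |v i| * Cb * |v j| := by
            refine Finset.sum_le_sum fun i _ => ?_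
            rw [abs_mul]
            calc |v i| * |∑ j, Υ t i j * v j| ≤ |v i| * ∑ j, |Υ t i j * v j| :=
                  mul_le_mul_of_nonneg_left (Finset.abs_sum_le_sum_abs _ _) (abs_nonneg _)
              _ = ∑ j, |v i| * |Υ t i j * v j| := Finset.mul_sum _ _ _
              _ ≤ ∑ j : Fin m, |v i| * Cb * |v j| := by
                  refine Finset.sum_le_sum fun j _ => ?_
                  rw [abs_mul, ← mul_assoc]
                  exact mul_le_mul_of_nonneg_right
                    (mul_le_mul_of_nonneg_left (hCb t i j) (abs_nonneg _)) (abs_nonneg _)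
    set S : Set ℝ := {t | q t < 0} ∩ Set.Icc (0:ℝ) T with hS_def
    have hSmeas : MeasurableSet S :=
      (hq measurableSet_Iio).inter measurableSet_Icc
    have hSsub : S ⊆ Set.Icc (0:ℝ) T := Set.inter_subset_right
    -- the test control
    set u : ℝ → Fin m → ℝ := S.indicator (fun _ => v) with hu_def
    have hu_meas : Measurable u := measurable_const.indicator hSmeas
    have hu_bd : ∃ Cu : ℝ, ∀ t, ‖u t‖ ≤ Cu :=
      ⟨‖v‖, fun t => norm_indicator_le_norm_self (fun _ => v) t⟩
    have h0 := hnonneg u hu_meas hu_bd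
    have hintegrand : (fun t => (u t) ⬝ᵥ (Υ t *ᵥ u t)) = S.indicator q := by
      funext t
      by_cases ht : t ∈ S
      · simp [hu_def, Set.indicator_of_mem ht, hq_def]
      · simp [hu_def, Set.indicator_of_notMem ht]
    rw [hintegrand, setIntegral_indicator hSmeas, Set.inter_eq_right.mpr hSsub] at h0
    -- integrability of q on S
    have hSfin : volume S ≠ ⊤ :=
      ne_top_of_le_ne_top (by simp) (measure_mono hSsub)
    have hint : IntegrableOn (fun t => -q t) S volume := by
      refine Measure.integrableOn_of_bounded (M := ∑ i : Fin m, ∑ j : Fin m, |v i| * Cb * |v j|) hSfin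
        (hq.neg.aestronglyMeasurable) (Filter.Eventually.of_forall fun t => ?_)
      simpa [Real.norm_eq_abs, abs_neg] using hqbd t
    have hnn : 0 ≤ᵐ[volume.restrict S] fun t => -q t := by
      filter_upwards [ae_restrict_mem hSmeas] with t ht
      exact le_of_lt (neg_pos.mpr ht.1)
    -- conclude S is null
    have hSnull : volume S = 0 := by
      by_contra hne
      have hsupp : Function.support (fun t => -q t) ∩ S = S := by
        refine Set.inter_eq_right.mpr fun t ht => ?_
        exact neg_ne_zero.mpr (ne_of_lt ht.1)
      have hpos : 0 < ∫ t in S, -q t := by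
        rw [setIntegral_pos_iff_support_of_nonneg_ae hnn hint, hsupp]
        exact lt_of_le_of_ne zero_le (Ne.symm hne)
      rw [integral_neg] at hpos
      linarith
    -- translate to a.e. statement
    rw [ae_restrict_iff' measurableSet_Icc]
    rw [ae_iff]
    have : {t | ¬ (t ∈ Set.Icc (0:ℝ) T → 0 ≤ q t)} = S := by
      ext t
      simp only [hS_def, Set.mem_setOf_eq, Set.mem_inter_iff, Classical.not_imp, not_le]
      exact and_comm
    rw [this]
    exact hSnull
  -- Step 2: combine over all rational vectors.
  have hcount : ∀ᵐ t ∂(volume.restrict (Set.Icc (0:ℝ) T)),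
      ∀ w : Fin m → ℚ, 0 ≤ (fun i => (w i : ℝ)) ⬝ᵥ (Υ t *ᵥ fun i => (w i : ℝ)) :=
    (ae_all_iff).mpr fun w => key _
  filter_upwards [hcount] with t ht
  -- Step 3: density + continuity to get PosSemidef.
  have hg : Continuous fun x : Fin m → ℝ => x ⬝ᵥ (Υ t *ᵥ x) := by
    simp only [dotProduct, mulVec]
    exact continuous_finset_sum _ fun i _ => (continuous_apply i).mul
      (continuous_finset_sum _ fun j _ => (continuous_const.mul (continuous_apply j)))
  have hclosed : IsClosed {x : Fin m → ℝ | 0 ≤ x ⬝ᵥ (Υ t *ᵥ x)} :=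
    isClosed_le continuous_const hg
  have hdense : Dense (Set.range fun w : Fin m → ℚ => fun i => (w i : ℝ)) := by
    have h1 : Dense (Set.pi Set.univ fun _ : Fin m => Set.range ((↑) : ℚ → ℝ)) :=
      dense_pi _ fun i _ => Rat.denseRange_cast
    have h2 : (Set.pi Set.univ fun _ : Fin m => Set.range ((↑) : ℚ → ℝ))
        = Set.range fun w : Fin m → ℚ => fun i => (w i : ℝ) := by
      ext x
      constructor
      · intro hx
        choose w hw using fun i => hx i (Set.mem_univ i)
        exact ⟨w, funext hw⟩
      · rintro ⟨w, rfl⟩ i _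
        exact ⟨w i, rfl⟩
    rwa [h2] at h1
  have hall : ∀ x : Fin m → ℝ, 0 ≤ x ⬝ᵥ (Υ t *ᵥ x) := by
    intro x
    have hsub : (Set.range fun w : Fin m → ℚ => fun i => (w i : ℝ))
        ⊆ {x : Fin m → ℝ | 0 ≤ x ⬝ᵥ (Υ t *ᵥ x)} := by
      rintro _ ⟨w, rfl⟩
      exact ht w
    have : x ∈ closure (Set.range fun w : Fin m → ℚ => fun i => (w i : ℝ)) :=
      hdense x
    have := closure_mono hsub this
    rwa [hclosed.closure_eq] at this
  rw [Matrix.posSemidef_iff_dotProduct_mulVec]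
  constructor
  · rw [Matrix.IsHermitian, Matrix.conjTranspose_eq_transpose_of_trivial]
    exact hΥsym t
  · intro x
    simpa using hall x
end

section
/- Let m be a positive integer, T > 0, and let Υ : [0,T] → (m×m real matrices) be Lebesgue measurable with Υ_t symmetric for every t and with uniformly bounded entries. If the set of t ∈ [0,T] at which Υ_t is not positive semidefinite has positive Lebesgue measure, then the infimum of ∫₀ᵀ u(t)ᵀ Υ_t u(t) dt over all bounded Lebesgue-measurable u : [0,T] → ℝ^m equals −∞. -/
open Matrix MeasureTheory Filter TopologicalSpace

/-!
At a time `t` where `Υ t` is not positive semidefinite, the open set of vectors with negative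
form `x ⬝ᵥ (Υ t *ᵥ x)` is nonempty, so it contains a term of a fixed dense sequence. Countable
subadditivity gives one vector `x` whose form is negative on a set `B` of positive measure, hence
`∫_B x ⬝ᵥ (Υ t *ᵥ x) < 0`. The control `c • x` on `B` and `0` elsewhere multiplies this integral
by `c ^ 2`, which tends to `+∞`.
-/

namespace Matrix

variable {n : Type*} [Fintype n]

theorem smul_dotProduct_mulVec_smul (A : Matrix n n ℝ) (c : ℝ) (x : n → ℝ) :
    (c • x) ⬝ᵥ (A *ᵥ (c • x)) = c ^ 2 * (x ⬝ᵥ (A *ᵥ x)) := by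
  rw [mulVec_smul, smul_dotProduct, dotProduct_smul, smul_eq_mul, smul_eq_mul]
  ring

theorem exists_dotProduct_mulVec_neg_of_not_posSemidef {A : Matrix n n ℝ} (hA : A.IsSymm)
    (h : ¬ A.PosSemidef) : ∃ x : n → ℝ, x ⬝ᵥ (A *ᵥ x) < 0 := by
  by_contra! hnonneg
  exact h (.of_dotProduct_mulVec_nonneg (isHermitian_iff_isSymm.2 hA) (by simpa using hnonneg))

end Matrix

theorem DenseRange.exists_dotProduct_mulVec_neg {ι n : Type*} [Fintype n] {v : ι → n → ℝ}
    (hv : DenseRange v) {A : Matrix n n ℝ} (hA : A.IsSymm) (h : ¬ A.PosSemidef) :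
    ∃ i, v i ⬝ᵥ (A *ᵥ v i) < 0 :=
  hv.exists_mem_open
    (isOpen_lt (continuous_id.dotProduct (continuous_const.matrix_mulVec continuous_id))
      continuous_const)
    (exists_dotProduct_mulVec_neg_of_not_posSemidef hA h)

theorem exists_sq_mul_lt {a : ℝ} (ha : a < 0) (r : ℝ) : ∃ c : ℝ, c ^ 2 * a < r :=
  ((tendsto_pow_atTop two_ne_zero).atTop_mul_const_of_neg ha).eventually
    (eventually_lt_atBot r) |>.exists

namespace MeasureTheory

variable {α : Type*} [MeasurableSpace α] {μ : Measure α} {s : Set α}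

theorem setIntegral_neg_of_forall_neg {f : α → ℝ} (hs : MeasurableSet s)
    (hf : IntegrableOn f s μ) (hneg : ∀ t ∈ s, f t < 0) (hμs : μ s ≠ 0) :
    ∫ t in s, f t ∂μ < 0 := by
  have hsupp : Function.support (-f) ∩ s = s :=
    Set.inter_eq_self_of_subset_right fun t ht => neg_ne_zero.2 (hneg t ht).ne
  have hpos := (setIntegral_pos_iff_support_of_nonneg_ae (f := -f)
    (ae_restrict_of_forall_mem hs fun t ht => (neg_pos.2 (hneg t ht)).le) hf.neg).2
    (by rw [hsupp]; exact pos_iff_ne_zero.2 hμs)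
  rw [integral_neg'] at hpos
  linarith

variable {n : Type*} [Fintype n] {Υ : α → Matrix n n ℝ}

theorem integrableOn_dotProduct_mulVec (hμs : μ s ≠ ⊤)
    (hΥmeas : ∀ i j, Measurable fun t => Υ t i j) (hΥbd : ∃ C : ℝ, ∀ t i j, |Υ t i j| ≤ C)
    (x : n → ℝ) : IntegrableOn (fun t => x ⬝ᵥ (Υ t *ᵥ x)) s μ := by
  obtain ⟨C, hC⟩ := hΥbd
  have hentry (i j : n) : IntegrableOn (fun t => Υ t i j) s μ :=
    Measure.integrableOn_of_bounded hμs (hΥmeas i j).aestronglyMeasurable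
      (M := C) (ae_of_all _ fun t => hC t i j)
  simp only [dotProduct, mulVec]
  exact integrable_finsetSum _ fun i _ =>
    (integrable_finsetSum _ fun j _ => (hentry i j).mul_const _).const_mul _

theorem setIntegral_indicator_dotProduct_mulVec {B : Set α} (hB : MeasurableSet B)
    (hBs : B ⊆ s) (x : n → ℝ) :
    ∫ t in s, B.indicator (fun _ => x) t ⬝ᵥ (Υ t *ᵥ B.indicator (fun _ => x) t) ∂μ =
      ∫ t in B, x ⬝ᵥ (Υ t *ᵥ x) ∂μ := by
  have hform (t : α) : B.indicator (fun _ => x) t ⬝ᵥ (Υ t *ᵥ B.indicator (fun _ => x) t) =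
      B.indicator (fun t => x ⬝ᵥ (Υ t *ᵥ x)) t := by
    by_cases ht : t ∈ B <;> simp [ht]
  simp_rw [hform]
  rw [setIntegral_indicator hB, Set.inter_eq_self_of_subset_right hBs]

theorem exists_setIntegral_dotProduct_mulVec_lt (hs : MeasurableSet s) (hμs : μ s ≠ ⊤)
    (hΥmeas : ∀ i j, Measurable fun t => Υ t i j) (hΥsym : ∀ t, (Υ t).IsSymm)
    (hΥbd : ∃ C : ℝ, ∀ t i j, |Υ t i j| ≤ C)
    (hbad : μ {t | t ∈ s ∧ ¬ (Υ t).PosSemidef} ≠ 0) (r : ℝ) :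
    ∃ u : α → n → ℝ, Measurable u ∧ (∃ C : ℝ, ∀ t, ‖u t‖ ≤ C) ∧
      ∫ t in s, u t ⬝ᵥ (Υ t *ᵥ u t) ∂μ < r := by
  let v := denseSeq (n → ℝ)
  let B k := {t | t ∈ s ∧ v k ⬝ᵥ (Υ t *ᵥ v k) < 0}
  have hbad_sub : {t | t ∈ s ∧ ¬ (Υ t).PosSemidef} ⊆ ⋃ k, B k := fun t ⟨hts, ht⟩ =>
    Set.mem_iUnion.2 <| ((denseRange_denseSeq _).exists_dotProduct_mulVec_neg (hΥsym t) ht).imp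
      fun _ hk => ⟨hts, hk⟩
  obtain ⟨k, hk⟩ := exists_measure_pos_of_not_measure_iUnion_null
    fun h => hbad (measure_mono_null hbad_sub h)
  have hB : MeasurableSet (B k) := by
    have hmeas : Measurable fun t => v k ⬝ᵥ (Υ t *ᵥ v k) := by
      simp only [dotProduct, mulVec]
      fun_prop
    exact hs.inter (hmeas measurableSet_Iio)
  have hBs : B k ⊆ s := fun _ ht => ht.1
  have hneg : ∫ t in B k, v k ⬝ᵥ (Υ t *ᵥ v k) ∂μ < 0 :=
    setIntegral_neg_of_forall_neg hB
      ((integrableOn_dotProduct_mulVec hμs hΥmeas hΥbd _).mono_set hBs) (fun _ ht => ht.2) hk.ne'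
  obtain ⟨c, hc⟩ := exists_sq_mul_lt hneg r
  refine ⟨(B k).indicator fun _ => c • v k, measurable_const.indicator hB,
    ⟨‖c • v k‖, fun t => norm_indicator_le_norm_self _ _⟩, ?_⟩
  simp only [setIntegral_indicator_dotProduct_mulVec hB hBs, smul_dotProduct_mulVec_smul,
    integral_const_mul]
  exact hc

end MeasureTheory

theorem quadratic_integral_unbounded_below_general
    (m : ℕ) (T : ℝ)
    (Υ : ℝ → Matrix (Fin m) (Fin m) ℝ)
    (hΥmeas : ∀ i j, Measurable fun t => Υ t i j)
    (hΥsym : ∀ t, (Υ t)ᵀ = Υ t)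
    (hΥbd : ∃ Cb : ℝ, ∀ t i j, |Υ t i j| ≤ Cb)
    (hpos : 0 < volume {t | t ∈ Set.Icc (0:ℝ) T ∧ ¬ (Υ t).PosSemidef}) :
    ∀ r : ℝ, ∃ u : ℝ → Fin m → ℝ, Measurable u ∧ (∃ Cu : ℝ, ∀ t, ‖u t‖ ≤ Cu) ∧
      (∫ t in Set.Icc (0:ℝ) T, (u t) ⬝ᵥ (Υ t *ᵥ u t)) < r :=
  exists_setIntegral_dotProduct_mulVec_lt measurableSet_Icc measure_Icc_lt_top.ne hΥmeas hΥsym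
    hΥbd hpos.ne'

/-- Quantitative necessity: if `Υ_t` fails to be positive semidefinite on a set of
positive Lebesgue measure in `[0,T]`, then the infimum of `∫₀ᵀ uᵀΥu dt` over
bounded measurable `u` is `−∞`. -/
theorem quadratic_integral_unbounded_below
    (m : ℕ) (hm : 0 < m) (T : ℝ) (hT : 0 < T)
    (Υ : ℝ → Matrix (Fin m) (Fin m) ℝ)
    (hΥmeas : ∀ i j, Measurable fun t => Υ t i j)
    (hΥsym : ∀ t, (Υ t)ᵀ = Υ t)
    (hΥbd : ∃ Cb : ℝ, ∀ t i j, |Υ t i j| ≤ Cb)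
    (hpos : 0 < volume {t | t ∈ Set.Icc (0:ℝ) T ∧ ¬ (Υ t).PosSemidef}) :
    ∀ r : ℝ, ∃ u : ℝ → Fin m → ℝ, Measurable u ∧ (∃ Cu : ℝ, ∀ t, ‖u t‖ ≤ Cu) ∧
      (∫ t in Set.Icc (0:ℝ) T, (u t) ⬝ᵥ (Υ t *ᵥ u t)) < r :=
  quadratic_integral_unbounded_below_general m T Υ hΥmeas hΥsym hΥbd hpos
end

section
/- Let n be a positive integer and T > 0. Let A, C, Q : [0,T] → (n×n real matrices) be continuous with Q_t symmetric positive semidefinite for every t ∈ [0,T], and let P_T be a symmetric positive semidefinite n×n real matrix. If P₁ : [0,T] → (n×n real matrices) is continuously differentiable and satisfies Ṗ₁(t) + Q_t + P₁(t) A_t + A_tᵀ P₁(t) + C_tᵀ P₁(t) C_t = 0 for all t ∈ [0,T] with P₁(T) = P_T, then P₁(t) is positive semidefinite for every t ∈ [0,T]; consequently, if R : [0,T] → (m×m real matrices) has R_t symmetric positive semidefinite and D : [0,T] → (n×m real matrices), then Υ̃_t = R_t + D_tᵀ P₁(t) D_t is symmetric positive semidefinite for every t. -/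
open Matrix Set Topology Filter

/-- If `f` has a derivative within `[a,b]` at `a`, `a < b`, and `f a` is a minimum on `[a,b]`,
then the derivative is nonnegative. -/
lemma aux_deriv_nonneg_left {f : ℝ → ℝ} {d a b : ℝ} (hab : a < b)
    (hf : HasDerivWithinAt f d (Set.Icc a b) a)
    (h0 : ∀ r ∈ Set.Icc a b, f a ≤ f r) : 0 ≤ d := by
  rw [hasDerivWithinAt_iff_tendsto_slope] at hf
  have hIoc : Set.Icc a b \ {a} = Set.Ioc a b := by
    ext x
    simp only [Set.mem_diff, Set.mem_Icc, Set.mem_singleton_iff, Set.mem_Ioc]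
    constructor
    · rintro ⟨⟨h1, h2⟩, h3⟩; exact ⟨lt_of_le_of_ne h1 (Ne.symm h3), h2⟩
    · rintro ⟨h1, h2⟩; exact ⟨⟨h1.le, h2⟩, h1.ne'⟩
  rw [hIoc, nhdsWithin_Ioc_eq_nhdsGT hab] at hf
  refine ge_of_tendsto hf ?_
  filter_upwards [Ioc_mem_nhdsGT hab] with r hr
  have h1 : 0 ≤ f r - f a := sub_nonneg.2 (h0 r ⟨hr.1.le, hr.2⟩)
  have h2 : 0 ≤ r - a := sub_nonneg.2 hr.1.le
  rw [slope_def_field]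
  exact div_nonneg h1 h2

lemma aux_cont_qf {n : ℕ} (S : Matrix (Fin n) (Fin n) ℝ) :
    Continuous fun v : Fin n → ℝ => v ⬝ᵥ S *ᵥ v := by
  simp only [dotProduct, Matrix.mulVec]
  exact continuous_finset_sum _ fun i _ =>
    (continuous_apply i).mul (continuous_finset_sum _ fun j _ =>
      continuous_const.mul (continuous_apply j))

lemma aux_gronwall_zero {ι : Type*} [Fintype ι] [Nonempty ι] {T Kb : ℝ} (hT : 0 ≤ T) (hKb : 0 ≤ Kb)
    {E E' : ℝ → ι → ℝ} (hc : ∀ i, ContinuousOn (fun t => E t i) (Set.Icc 0 T))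
    (hd : ∀ t ∈ Set.Icc (0:ℝ) T, ∀ i, HasDerivWithinAt (fun s => E s i) (E' t i) (Set.Icc 0 T) t)
    (hbound : ∀ t ∈ Set.Icc (0:ℝ) T, ∀ i, |E' t i| ≤ Kb * ‖E t‖)
    (hend : E T = 0) : ∀ t ∈ Set.Icc (0:ℝ) T, E t = 0 := by
  have hmaps : Set.MapsTo (fun s : ℝ => T - s) (Set.Icc 0 T) (Set.Icc 0 T) := by
    intro s hs
    simp only [Set.mem_Icc] at hs ⊢
    constructor <;> linarith
  have key : ∀ x ∈ Set.Icc (0:ℝ) T, ‖E (T - x)‖ ≤ gronwallBound 0 Kb 0 (x - 0) := by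
    apply norm_le_gronwallBound_of_norm_deriv_right_le
      (f := fun s => E (T - s)) (f' := fun s i => -(E' (T - s) i))
    · refine continuousOn_pi.2 fun i => (hc i).comp ?_ hmaps
      exact continuousOn_const.sub continuousOn_id
    · intro x hx
      have hxI : x ∈ Set.Icc (0:ℝ) T := ⟨hx.1, hx.2.le⟩
      have hTx : T - x ∈ Set.Icc (0:ℝ) T := hmaps hxI
      have hin : HasDerivWithinAt (fun s : ℝ => T - s) (-1) (Set.Icc 0 T) x :=
        (hasDerivWithinAt_id x _).const_sub T
      have h1 : HasDerivWithinAt (fun s => E (T - s)) (fun i => -(E' (T - x) i))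
          (Set.Icc 0 T) x := by
        refine hasDerivWithinAt_pi.2 fun i => ?_
        have := HasDerivWithinAt.comp x (hd (T - x) hTx i) hin hmaps
        simpa [mul_neg_one, Function.comp_def] using this
      refine h1.mono_of_mem_nhdsWithin ?_
      have h2 : Set.Ici x ∩ Set.Iic T ⊆ Set.Icc 0 T := fun y hy => ⟨le_trans hx.1 hy.1, hy.2⟩
      exact Filter.mem_of_superset
        (Filter.inter_mem self_mem_nhdsWithin
          (mem_nhdsWithin_of_mem_nhds (Iic_mem_nhds hx.2))) h2
    · simp [hend]
    · intro x hx
      rw [add_zero]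
      have hxI : x ∈ Set.Icc (0:ℝ) T := ⟨hx.1, hx.2.le⟩
      refine pi_norm_le_iff_of_nonneg (by positivity) |>.2 fun i => ?_
      rw [norm_neg, Real.norm_eq_abs]
      exact hbound (T - x) (hmaps hxI) i
  intro t ht
  have h1 : T - t ∈ Set.Icc (0:ℝ) T := hmaps ht
  have := key (T - t) h1
  rw [gronwallBound_ε0_δ0] at this
  have h2 : ‖E (T - (T - t))‖ ≤ 0 := by simpa using this
  have h3 : E (T - (T - t)) = 0 := norm_le_zero_iff.1 h2
  simpa using h3

lemma aux_entry_id (n : ℕ) (Q P A C : Matrix (Fin n) (Fin n) ℝ)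
    (hQ : ∀ i j, Q i j = Q j i) (i j : Fin n) :
    (-(Q + P * A + Aᵀ * P + Cᵀ * P * C)) i j - (-(Q + P * A + Aᵀ * P + Cᵀ * P * C)) j i =
    -((∑ k, (P i k - P k i) * A k j) + (∑ k, A k i * (P k j - P j k))
      + ∑ k, ∑ l, C k i * (P k l - P l k) * C l j) := by
  simp only [Matrix.neg_apply, Matrix.add_apply, Matrix.mul_apply, Matrix.transpose_apply]
  rw [hQ i j]
  simp only [sub_mul, mul_sub, Finset.sum_sub_distrib, Finset.sum_mul, Finset.mul_sum]
  have h1 : (∑ x, A x j * P x i) = ∑ x, P x i * A x j :=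
    Finset.sum_congr rfl fun x _ => mul_comm _ _
  have h2 : (∑ x, P j x * A x i) = ∑ x, A x i * P j x :=
    Finset.sum_congr rfl fun x _ => mul_comm _ _
  have h3 : (∑ x : Fin n, ∑ y : Fin n, C y i * P y x * C x j)
      = ∑ x, ∑ y, C x i * P x y * C y j := Finset.sum_comm
  have h4 : (∑ x : Fin n, ∑ y : Fin n, C y j * P y x * C x i)
      = ∑ x, ∑ y, C x i * P y x * C y j :=
    Finset.sum_congr rfl fun x _ => Finset.sum_congr rfl fun y _ => by ring
  rw [h1, h2, h3, h4]
  ring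

lemma aux_symm (n : ℕ) (hn : 0 < n) (T : ℝ) (hT : 0 < T)
    (A C Q P₁ : ℝ → Matrix (Fin n) (Fin n) ℝ) (K : ℝ) (hK0 : 0 ≤ K)
    (hKA : ∀ t ∈ Set.Icc (0:ℝ) T, ∀ i j, |A t i j| ≤ K)
    (hKC : ∀ t ∈ Set.Icc (0:ℝ) T, ∀ i j, |C t i j| ≤ K)
    (hQsym : ∀ t ∈ Set.Icc (0:ℝ) T, ∀ i j, Q t i j = Q t j i)
    (hPc : ∀ i j, ContinuousOn (fun t => P₁ t i j) (Set.Icc 0 T))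
    (hode : ∀ t ∈ Set.Icc (0:ℝ) T, ∀ i j,
      HasDerivWithinAt (fun s => P₁ s i j)
        ((-(Q t + P₁ t * A t + (A t)ᵀ * P₁ t + (C t)ᵀ * P₁ t * C t)) i j)
        (Set.Icc 0 T) t)
    (hPTsym : ∀ i j, P₁ T i j = P₁ T j i) :
    ∀ t ∈ Set.Icc (0:ℝ) T, ∀ i j, P₁ t i j = P₁ t j i := by
  have hne : Nonempty (Fin n) := ⟨⟨0, hn⟩⟩
  have hEle : ∀ t (a b : Fin n),
      |P₁ t a b - P₁ t b a| ≤ ‖fun p : Fin n × Fin n => P₁ t p.1 p.2 - P₁ t p.2 p.1‖ := by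
    intro t a b
    have := norm_le_pi_norm (fun p : Fin n × Fin n => P₁ t p.1 p.2 - P₁ t p.2 p.1) (a, b)
    simpa [Real.norm_eq_abs] using this
  have key : ∀ t ∈ Set.Icc (0:ℝ) T,
      (fun p : Fin n × Fin n => P₁ t p.1 p.2 - P₁ t p.2 p.1) = 0 := by
    refine aux_gronwall_zero hT.le (Kb := 2*n*K + n^2*K^2) (by positivity)
      (E := fun (t : ℝ) (p : Fin n × Fin n) => P₁ t p.1 p.2 - P₁ t p.2 p.1)
      (E' := fun (t : ℝ) (p : Fin n × Fin n) => (-(Q t + P₁ t * A t + (A t)ᵀ * P₁ t + (C t)ᵀ * P₁ t * C t)) p.1 p.2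
        - (-(Q t + P₁ t * A t + (A t)ᵀ * P₁ t + (C t)ᵀ * P₁ t * C t)) p.2 p.1)
      (fun p => ((hPc p.1 p.2).sub (hPc p.2 p.1)))
      (fun t ht p => (hode t ht p.1 p.2).sub (hode t ht p.2 p.1)) ?_ ?_
    · intro t ht p
      obtain ⟨i, j⟩ := p
      have hid := aux_entry_id n (Q t) (P₁ t) (A t) (C t) (hQsym t ht) i j
      show |(-(Q t + P₁ t * A t + (A t)ᵀ * P₁ t + (C t)ᵀ * P₁ t * C t)) i j
        - (-(Q t + P₁ t * A t + (A t)ᵀ * P₁ t + (C t)ᵀ * P₁ t * C t)) j i| ≤ _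
      rw [hid, abs_neg]
      have habs : |(∑ k, (P₁ t i k - P₁ t k i) * A t k j)
            + (∑ k, A t k i * (P₁ t k j - P₁ t j k))
            + ∑ k, ∑ l, C t k i * (P₁ t k l - P₁ t l k) * C t l j|
          ≤ (∑ _k : Fin n, ‖fun p : Fin n × Fin n => P₁ t p.1 p.2 - P₁ t p.2 p.1‖ * K)
            + (∑ _k : Fin n, K * ‖fun p : Fin n × Fin n => P₁ t p.1 p.2 - P₁ t p.2 p.1‖)
            + ∑ _k : Fin n, ∑ _l : Fin n,
                K * ‖fun p : Fin n × Fin n => P₁ t p.1 p.2 - P₁ t p.2 p.1‖ * K := by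
        refine le_trans (abs_add_le _ _) (add_le_add (le_trans (abs_add_le _ _) (add_le_add ?_ ?_)) ?_)
        · refine le_trans (Finset.abs_sum_le_sum_abs _ _) (Finset.sum_le_sum fun k _ => ?_)
          rw [abs_mul]
          exact mul_le_mul (hEle t i k) (hKA t ht k j) (abs_nonneg _) (norm_nonneg _)
        · refine le_trans (Finset.abs_sum_le_sum_abs _ _) (Finset.sum_le_sum fun k _ => ?_)
          rw [abs_mul]
          exact mul_le_mul (hKA t ht k i) (hEle t k j) (abs_nonneg _) hK0
        · refine le_trans (Finset.abs_sum_le_sum_abs _ _) (Finset.sum_le_sum fun k _ => ?_)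
          refine le_trans (Finset.abs_sum_le_sum_abs _ _) (Finset.sum_le_sum fun l _ => ?_)
          rw [abs_mul, abs_mul]
          exact mul_le_mul (mul_le_mul (hKC t ht k i) (hEle t k l) (abs_nonneg _) hK0)
            (hKC t ht l j) (abs_nonneg _) (by positivity)
      refine le_trans habs (le_of_eq ?_)
      simp only [Finset.sum_const, Finset.card_univ, Fintype.card_fin, nsmul_eq_mul]
      ring
    · funext p
      exact sub_eq_zero.2 (hPTsym p.1 p.2)
  intro t ht i j
  have := congrFun (key t ht) (i, j)
  exact sub_eq_zero.1 this

lemma aux_vv_nonneg {n : ℕ} (v : Fin n → ℝ) : 0 ≤ v ⬝ᵥ v :=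
  Finset.sum_nonneg fun i _ => mul_self_nonneg _

lemma aux_dot_pos {n : ℕ} {v : Fin n → ℝ} (hv : v ≠ 0) : 0 < v ⬝ᵥ v := by
  obtain ⟨i, hi⟩ := Function.ne_iff.1 hv
  have h1 : 0 < v i * v i := mul_self_pos.2 (by simpa using hi)
  exact lt_of_lt_of_le h1
    (Finset.single_le_sum (f := fun j => v j * v j) (fun j _ => mul_self_nonneg _)
      (Finset.mem_univ i))

lemma aux_norm_sq_le {n : ℕ} (v : Fin n → ℝ) : ‖v‖^2 ≤ v ⬝ᵥ v := by
  have h2 : ‖v‖ ≤ Real.sqrt (v ⬝ᵥ v) := by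
    refine pi_norm_le_iff_of_nonneg (Real.sqrt_nonneg _) |>.2 fun i => ?_
    rw [Real.norm_eq_abs]
    rw [show |v i| = Real.sqrt ((v i)^2) by rw [Real.sqrt_sq_eq_abs]]
    refine Real.sqrt_le_sqrt ?_
    have := Finset.single_le_sum (f := fun j => v j * v j) (fun j _ => mul_self_nonneg _)
      (Finset.mem_univ i)
    simpa [pow_two, dotProduct] using this
  calc ‖v‖^2 ≤ (Real.sqrt (v ⬝ᵥ v))^2 := by
        exact pow_le_pow_left₀ (norm_nonneg _) h2 2
    _ = v ⬝ᵥ v := Real.sq_sqrt (aux_vv_nonneg v)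

lemma aux_quad_abs_le {n : ℕ} {K : ℝ} (hK0 : 0 ≤ K) (B : Matrix (Fin n) (Fin n) ℝ)
    (hB : ∀ i j, |B i j| ≤ K) (v w : Fin n → ℝ) :
    |v ⬝ᵥ B *ᵥ w| ≤ (n:ℝ)^2 * K * (‖v‖ * ‖w‖) := by
  have hvi : ∀ (u : Fin n → ℝ) i, |u i| ≤ ‖u‖ := by
    intro u i
    simpa [Real.norm_eq_abs] using norm_le_pi_norm u i
  have hrow : ∀ i, |(B *ᵥ w) i| ≤ (n:ℝ) * (K * ‖w‖) := by
    intro i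
    show |∑ j, B i j * w j| ≤ _
    calc |∑ j, B i j * w j| ≤ ∑ j, |B i j * w j| := Finset.abs_sum_le_sum_abs _ _
      _ ≤ ∑ _j : Fin n, K * ‖w‖ := Finset.sum_le_sum fun j _ => by
            rw [abs_mul]; exact mul_le_mul (hB i j) (hvi w j) (abs_nonneg _) hK0
      _ = (n:ℝ) * (K * ‖w‖) := by simp [Finset.sum_const, Finset.card_univ, nsmul_eq_mul]
  calc |v ⬝ᵥ B *ᵥ w| ≤ ∑ i, |v i * (B *ᵥ w) i| := Finset.abs_sum_le_sum_abs _ _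
    _ ≤ ∑ _i : Fin n, ‖v‖ * ((n:ℝ) * (K * ‖w‖)) := Finset.sum_le_sum fun i _ => by
        rw [abs_mul]
        exact mul_le_mul (hvi v i) (hrow i) (abs_nonneg _) (norm_nonneg _)
    _ = (n:ℝ)^2 * K * (‖v‖ * ‖w‖) := by
        simp [Finset.sum_const, Finset.card_univ, nsmul_eq_mul]; ring
  
lemma aux_image_dot_le {n : ℕ} {K : ℝ} (hK0 : 0 ≤ K) (B : Matrix (Fin n) (Fin n) ℝ)
    (hB : ∀ i j, |B i j| ≤ K) (v : Fin n → ℝ) :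
    (B *ᵥ v) ⬝ᵥ (B *ᵥ v) ≤ (n:ℝ)^3 * K^2 * ‖v‖^2 := by
  have hvi : ∀ (u : Fin n → ℝ) i, |u i| ≤ ‖u‖ := by
    intro u i
    simpa [Real.norm_eq_abs] using norm_le_pi_norm u i
  have hrow : ∀ i, |(B *ᵥ v) i| ≤ (n:ℝ) * (K * ‖v‖) := by
    intro i
    show |∑ j, B i j * v j| ≤ _
    calc |∑ j, B i j * v j| ≤ ∑ j, |B i j * v j| := Finset.abs_sum_le_sum_abs _ _
      _ ≤ ∑ _j : Fin n, K * ‖v‖ := Finset.sum_le_sum fun j _ => by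
            rw [abs_mul]; exact mul_le_mul (hB i j) (hvi v j) (abs_nonneg _) hK0
      _ = (n:ℝ) * (K * ‖v‖) := by simp [Finset.sum_const, Finset.card_univ, nsmul_eq_mul]
  calc (B *ᵥ v) ⬝ᵥ (B *ᵥ v) ≤ ∑ _i : Fin n, ((n:ℝ) * (K * ‖v‖)) * ((n:ℝ) * (K * ‖v‖)) := by
        refine Finset.sum_le_sum fun i _ => ?_
        rw [show (B *ᵥ v) i * (B *ᵥ v) i = |(B *ᵥ v) i| * |(B *ᵥ v) i| by
          rw [← abs_mul, abs_mul_self]]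
        exact mul_le_mul (hrow i) (hrow i) (abs_nonneg _) (by positivity)
    _ = (n:ℝ)^3 * K^2 * ‖v‖^2 := by
        simp [Finset.sum_const, Finset.card_univ, nsmul_eq_mul]; ring

lemma aux_qf_deriv {n : ℕ} {P : ℝ → Matrix (Fin n) (Fin n) ℝ} {X : Matrix (Fin n) (Fin n) ℝ}
    {s : Set ℝ} {t : ℝ}
    (hd : ∀ i j, HasDerivWithinAt (fun u => P u i j) (X i j) s t) (v : Fin n → ℝ) :
    HasDerivWithinAt (fun u => v ⬝ᵥ (P u) *ᵥ v) (v ⬝ᵥ X *ᵥ v) s t := by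
  simp only [dotProduct, Matrix.mulVec]
  exact HasDerivWithinAt.fun_sum fun i _ =>
    ((HasDerivWithinAt.fun_sum fun j _ => (hd i j).mul_const (v j)).const_mul (v i))

lemma aux_qf_cont {n : ℕ} {P : ℝ → Matrix (Fin n) (Fin n) ℝ} {s : Set ℝ}
    (hc : ∀ i j, ContinuousOn (fun t => P t i j) s) (v : Fin n → ℝ) :
    ContinuousOn (fun t => v ⬝ᵥ (P t) *ᵥ v) s := by
  simp only [dotProduct, Matrix.mulVec]
  exact continuousOn_finset_sum _ fun i _ =>
    continuousOn_const.mul (continuousOn_finset_sum _ fun j _ => (hc i j).mul continuousOn_const)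

lemma aux_X_qf {n : ℕ} (Q P A C : Matrix (Fin n) (Fin n) ℝ) (hPsym : Pᵀ = P) (c : ℝ)
    (v : Fin n → ℝ) (hker : P *ᵥ v = -(c • v)) :
    v ⬝ᵥ (-(Q + P * A + Aᵀ * P + Cᵀ * P * C)) *ᵥ v
      = -(v ⬝ᵥ Q *ᵥ v) + c * (v ⬝ᵥ (A *ᵥ v)) + c * ((A *ᵥ v) ⬝ᵥ v)
        - ((C *ᵥ v) ⬝ᵥ P *ᵥ (C *ᵥ v)) := by
  have hvP : v ᵥ* P = -(c • v) := by
    rw [← hPsym, vecMul_transpose]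
    exact hker
  have h1 : v ⬝ᵥ (P * A) *ᵥ v = -(c * (v ⬝ᵥ (A *ᵥ v))) := by
    rw [← mulVec_mulVec, dotProduct_mulVec, hvP, neg_dotProduct, smul_dotProduct]
    simp
  have h2 : v ⬝ᵥ (Aᵀ * P) *ᵥ v = -(c * ((A *ᵥ v) ⬝ᵥ v)) := by
    rw [← mulVec_mulVec, hker, mulVec_neg, dotProduct_neg, mulVec_smul, dotProduct_smul,
      dotProduct_mulVec, vecMul_transpose]
    simp [smul_eq_mul]
  have h3 : v ⬝ᵥ (Cᵀ * P * C) *ᵥ v = (C *ᵥ v) ⬝ᵥ P *ᵥ (C *ᵥ v) := by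
    rw [← mulVec_mulVec, ← mulVec_mulVec, dotProduct_mulVec, vecMul_transpose]
  rw [neg_mulVec, dotProduct_neg, add_mulVec, add_mulVec, add_mulVec, dotProduct_add,
    dotProduct_add, dotProduct_add, h1, h2, h3]
  ring

set_option maxHeartbeats 1600000 in
lemma aux_eps (n : ℕ) (hn : 0 < n) (T : ℝ) (hT : 0 < T)
    (A C Q P₁ : ℝ → Matrix (Fin n) (Fin n) ℝ) (K : ℝ) (hK0 : 0 ≤ K)
    (hKA : ∀ t ∈ Set.Icc (0:ℝ) T, ∀ i j, |A t i j| ≤ K)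
    (hKC : ∀ t ∈ Set.Icc (0:ℝ) T, ∀ i j, |C t i j| ≤ K)
    (hQpsd : ∀ t ∈ Set.Icc (0:ℝ) T, (Q t).PosSemidef)
    (hPc : ∀ i j, ContinuousOn (fun t => P₁ t i j) (Set.Icc 0 T))
    (hode : ∀ t ∈ Set.Icc (0:ℝ) T, ∀ i j,
      HasDerivWithinAt (fun s => P₁ s i j)
        ((-(Q t + P₁ t * A t + (A t)ᵀ * P₁ t + (C t)ᵀ * P₁ t * C t)) i j)
        (Set.Icc 0 T) t)
    (hsym : ∀ t ∈ Set.Icc (0:ℝ) T, ∀ i j, P₁ t i j = P₁ t j i)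
    (hPTpsd : (P₁ T).PosSemidef)
    (ε : ℝ) (hε : 0 < ε) :
    ∀ t ∈ Set.Icc (0:ℝ) T, ∀ v : Fin n → ℝ,
      0 ≤ v ⬝ᵥ (P₁ t) *ᵥ v
        + ε * Real.exp ((2*(n:ℝ)^2*K + (n:ℝ)^3*K^2 + 1)*(T-t)) * (v ⬝ᵥ v) := by
  have hneFin : Nonempty (Fin n) := ⟨⟨0, hn⟩⟩
  set M : ℝ := 2*(n:ℝ)^2*K + (n:ℝ)^3*K^2 + 1 with hM
  have hM0 : 0 < M := by rw [hM]; positivity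
  have hPTq : ∀ v : Fin n → ℝ, 0 ≤ v ⬝ᵥ (P₁ T) *ᵥ v := by
    intro v
    simpa using hPTpsd.dotProduct_mulVec_nonneg v
  set J : Set ℝ := {t | t ∈ Set.Icc 0 T ∧ ∀ s ∈ Set.Icc t T, ∀ v : Fin n → ℝ,
    0 ≤ v ⬝ᵥ (P₁ s) *ᵥ v + ε * Real.exp (M*(T-s)) * (v ⬝ᵥ v)} with hJ
  have hTJ : T ∈ J := by
    refine ⟨⟨hT.le, le_rfl⟩, fun s hs v => ?_⟩
    have hsT : s = T := le_antisymm hs.2 hs.1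
    have h1 : 0 ≤ ε * Real.exp (M*(T-s)) * (v ⬝ᵥ v) := by
      have := aux_vv_nonneg v
      positivity
    refine add_nonneg ?_ h1
    rw [hsT]
    exact hPTq v
  have hJbdd : BddBelow J := ⟨0, fun x hx => hx.1.1⟩
  have hJne : J.Nonempty := ⟨T, hTJ⟩
  set t₀ : ℝ := sInf J with ht₀def
  have ht₀0 : 0 ≤ t₀ := le_csInf hJne fun x hx => hx.1.1
  have ht₀T : t₀ ≤ T := csInf_le hJbdd hTJ
  have ht₀I : t₀ ∈ Set.Icc (0:ℝ) T := ⟨ht₀0, ht₀T⟩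
  have claim1 : ∀ s, t₀ < s → s ≤ T → ∀ v : Fin n → ℝ,
      0 ≤ v ⬝ᵥ (P₁ s) *ᵥ v + ε * Real.exp (M*(T-s)) * (v ⬝ᵥ v) := by
    intro s h1 h2 v
    obtain ⟨t, htJ, hts⟩ := exists_lt_of_csInf_lt hJne h1
    exact htJ.2 s ⟨hts.le, h2⟩ v
  have claim2 : ∀ v : Fin n → ℝ,
      0 ≤ v ⬝ᵥ (P₁ t₀) *ᵥ v + ε * Real.exp (M*(T-t₀)) * (v ⬝ᵥ v) := by
    rcases eq_or_lt_of_le ht₀T with heqT | hltT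
    · rw [heqT]
      intro v
      have h1 : 0 ≤ ε * Real.exp (M*(T-T)) * (v ⬝ᵥ v) := by
        have := aux_vv_nonneg v
        positivity
      exact add_nonneg (hPTq v) h1
    · intro v
      have hcOn : ContinuousOn
          (fun s => v ⬝ᵥ (P₁ s) *ᵥ v + ε * Real.exp (M*(T-s)) * (v ⬝ᵥ v))
          (Set.Icc 0 T) := by
        refine (aux_qf_cont hPc v).add (Continuous.continuousOn ?_)
        fun_prop
      have hcont : ContinuousWithinAt
          (fun s => v ⬝ᵥ (P₁ s) *ᵥ v + ε * Real.exp (M*(T-s)) * (v ⬝ᵥ v))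
          (Set.Ioc t₀ T) t₀ :=
        (hcOn.continuousWithinAt ht₀I).mono fun x hx => ⟨le_trans ht₀0 hx.1.le, hx.2⟩
      haveI : (𝓝[Set.Ioc t₀ T] t₀).NeBot := by
        rw [nhdsWithin_Ioc_eq_nhdsGT hltT]
        infer_instance
      refine ge_of_tendsto hcont ?_
      filter_upwards [self_mem_nhdsWithin] with s hs
      exact claim1 s hs.1 hs.2 v
  have claimIcc : ∀ s ∈ Set.Icc t₀ T, ∀ v : Fin n → ℝ,
      0 ≤ v ⬝ᵥ (P₁ s) *ᵥ v + ε * Real.exp (M*(T-s)) * (v ⬝ᵥ v) := by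
    intro s hs v
    rcases eq_or_lt_of_le hs.1 with he | hl
    · rw [← he]; exact claim2 v
    · exact claim1 s hl hs.2 v
  have ht₀ : t₀ = 0 := by
    by_contra hne0
    have hpos : 0 < t₀ := lt_of_le_of_ne ht₀0 (Ne.symm hne0)
    set c : ℝ := ε * Real.exp (M*(T-t₀)) with hc
    have hcpos : 0 < c := by rw [hc]; positivity
    set S : Matrix (Fin n) (Fin n) ℝ := P₁ t₀ + c • (1 : Matrix (Fin n) (Fin n) ℝ) with hS
    have hSq : ∀ w : Fin n → ℝ, w ⬝ᵥ S *ᵥ w = w ⬝ᵥ (P₁ t₀) *ᵥ w + c * (w ⬝ᵥ w) := by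
      intro w
      rw [hS]
      simp [add_mulVec, smul_mulVec, one_mulVec, dotProduct_add, dotProduct_smul,
        smul_eq_mul]
    have hsymt₀ : (P₁ t₀)ᵀ = P₁ t₀ := by
      ext i j
      simp only [Matrix.transpose_apply]
      exact hsym t₀ ht₀I j i
    have hSsym : S.IsHermitian := by
      show Sᴴ = S
      rw [hS]
      ext i j
      simp only [Matrix.conjTranspose_apply, Matrix.add_apply, Matrix.smul_apply,
        Matrix.one_apply, star_trivial, smul_eq_mul]
      rw [hsym t₀ ht₀I j i]
      congr 1
      simp [eq_comm]
    have hSpsd : S.PosSemidef := by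
      refine PosSemidef.of_dotProduct_mulVec_nonneg hSsym fun w => ?_
      rw [star_trivial, hSq w]
      exact claim2 w
    have hSpd : S.PosDef := by
      rcases eq_or_lt_of_le ht₀T with heqT | hltT
      · refine PosDef.of_dotProduct_mulVec_pos hSsym fun w hw => ?_
        rw [star_trivial, hSq w]
        have h1 : 0 ≤ w ⬝ᵥ (P₁ t₀) *ᵥ w := by rw [heqT]; exact hPTq w
        have h2 := mul_pos hcpos (aux_dot_pos hw)
        linarith
      · by_contra hnd
        obtain ⟨w, hw0, hwle⟩ : ∃ w : Fin n → ℝ, w ≠ 0 ∧ star w ⬝ᵥ S *ᵥ w ≤ 0 := by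
          by_contra hcon
          push_neg at hcon
          exact hnd (PosDef.of_dotProduct_mulVec_pos hSsym fun x hx => hcon x hx)
        have hq0 : star w ⬝ᵥ S *ᵥ w = 0 := le_antisymm hwle (hSpsd.dotProduct_mulVec_nonneg w)
        have hker : S *ᵥ w = 0 := (hSpsd.dotProduct_mulVec_zero_iff w).1 hq0
        have hPw : (P₁ t₀) *ᵥ w = -(c • w) := by
          rw [hS] at hker
          rw [add_mulVec, smul_mulVec, one_mulVec] at hker
          exact eq_neg_of_add_eq_zero_left hker
        have hq0' : w ⬝ᵥ (P₁ t₀) *ᵥ w + c * (w ⬝ᵥ w) = 0 := by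
          rw [← hSq w, ← star_trivial w]
          exact hq0
        have hderiv : HasDerivWithinAt
            (fun s => w ⬝ᵥ (P₁ s) *ᵥ w + ε * Real.exp (M*(T-s)) * (w ⬝ᵥ w))
            (w ⬝ᵥ (-(Q t₀ + P₁ t₀ * A t₀ + (A t₀)ᵀ * P₁ t₀ + (C t₀)ᵀ * P₁ t₀ * C t₀)) *ᵥ w
              + ε * (Real.exp (M*(T-t₀)) * (M * (-1))) * (w ⬝ᵥ w))
            (Set.Icc t₀ T) t₀ := by
        
          have h1 := aux_qf_deriv (fun i j => hode t₀ ht₀I i j) w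
          have h2 : HasDerivAt (fun s => ε * Real.exp (M*(T-s)) * (w ⬝ᵥ w))
              (ε * (Real.exp (M*(T-t₀)) * (M * (-1))) * (w ⬝ᵥ w)) t₀ :=
            ((((hasDerivAt_id t₀).const_sub T).const_mul M).exp.const_mul ε).mul_const _
          exact (h1.add h2.hasDerivWithinAt).mono (Set.Icc_subset_Icc ht₀0 le_rfl)
        have hmin : ∀ r ∈ Set.Icc t₀ T,
            (fun s => w ⬝ᵥ (P₁ s) *ᵥ w + ε * Real.exp (M*(T-s)) * (w ⬝ᵥ w)) t₀
              ≤ (fun s => w ⬝ᵥ (P₁ s) *ᵥ w + ε * Real.exp (M*(T-s)) * (w ⬝ᵥ w)) r := by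
          intro r hr
          have h1 : w ⬝ᵥ (P₁ t₀) *ᵥ w + ε * Real.exp (M*(T-t₀)) * (w ⬝ᵥ w) = 0 := by
            rw [← hc]
            exact hq0'
          show w ⬝ᵥ (P₁ t₀) *ᵥ w + ε * Real.exp (M*(T-t₀)) * (w ⬝ᵥ w)
              ≤ w ⬝ᵥ (P₁ r) *ᵥ w + ε * Real.exp (M*(T-r)) * (w ⬝ᵥ w)
          rw [h1]
          exact claimIcc r hr w
        have hd0 := aux_deriv_nonneg_left hltT hderiv hmin
        -- estimates
        have hXq := aux_X_qf (Q t₀) (P₁ t₀) (A t₀) (C t₀) hsymt₀ c w hPw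
        have hQ0 : 0 ≤ w ⬝ᵥ (Q t₀) *ᵥ w := by simpa using (hQpsd t₀ ht₀I).dotProduct_mulVec_nonneg w
        have hA1 : |w ⬝ᵥ (A t₀ *ᵥ w)| ≤ (n:ℝ)^2 * K * (‖w‖ * ‖w‖) :=
          aux_quad_abs_le hK0 (A t₀) (fun i j => hKA t₀ ht₀I i j) w w
        have hA2 : |(A t₀ *ᵥ w) ⬝ᵥ w| ≤ (n:ℝ)^2 * K * (‖w‖ * ‖w‖) := by
          rw [dotProduct_comm]
          exact hA1
        have hCw : (C t₀ *ᵥ w) ⬝ᵥ (C t₀ *ᵥ w) ≤ (n:ℝ)^3 * K^2 * ‖w‖^2 :=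
          aux_image_dot_le hK0 (C t₀) (fun i j => hKC t₀ ht₀I i j) w
        have hPCw : 0 ≤ (C t₀ *ᵥ w) ⬝ᵥ (P₁ t₀) *ᵥ (C t₀ *ᵥ w)
            + c * ((C t₀ *ᵥ w) ⬝ᵥ (C t₀ *ᵥ w)) := claim2 (C t₀ *ᵥ w)
        have htail : ε * (Real.exp (M*(T-t₀)) * (M * (-1))) * (w ⬝ᵥ w)
            = -(c * M * (w ⬝ᵥ w)) := by
          rw [hc]; ring
        rw [hXq, htail] at hd0
        have hn2 : ‖w‖^2 ≤ w ⬝ᵥ w := aux_norm_sq_le w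
        have hwn : 0 < ‖w‖ := norm_pos_iff.2 hw0
        have e1 : c * (w ⬝ᵥ (A t₀ *ᵥ w)) ≤ c * ((n:ℝ)^2 * K * (‖w‖ * ‖w‖)) :=
          mul_le_mul_of_nonneg_left (le_trans (le_abs_self _) hA1) hcpos.le
        have e2 : c * ((A t₀ *ᵥ w) ⬝ᵥ w) ≤ c * ((n:ℝ)^2 * K * (‖w‖ * ‖w‖)) :=
          mul_le_mul_of_nonneg_left (le_trans (le_abs_self _) hA2) hcpos.le
        have e3 : c * ((C t₀ *ᵥ w) ⬝ᵥ (C t₀ *ᵥ w)) ≤ c * ((n:ℝ)^3 * K^2 * ‖w‖^2) :=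
          mul_le_mul_of_nonneg_left hCw hcpos.le
        have e4 : c * M * ‖w‖^2 ≤ c * M * (w ⬝ᵥ w) :=
          mul_le_mul_of_nonneg_left hn2 (by positivity)
        have hMid : 2 * ((n:ℝ)^2 * K * (‖w‖ * ‖w‖)) + (n:ℝ)^3*K^2*‖w‖^2 - M * ‖w‖^2
            = -‖w‖^2 := by
          rw [hM]; ring
        nlinarith [sq_nonneg ‖w‖, mul_pos hcpos (mul_pos hwn hwn)]
    -- uniform lower bound on the sphere
    haveI : Inhabited (Fin n) := ⟨⟨0, hn⟩⟩
    haveI : Nontrivial (Fin n → ℝ) := Pi.nontrivial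
    obtain ⟨u₀, hu₀s, hu₀min'⟩ := (isCompact_sphere (0 : Fin n → ℝ) 1).exists_isMinOn
      (NormedSpace.sphere_nonempty.2 zero_le_one) ((aux_cont_qf S).continuousOn)
    have hu₀min := isMinOn_iff.1 hu₀min'
    have hu₀ : u₀ ≠ 0 := by
      intro h
      rw [h] at hu₀s
      simp at hu₀s
    have hc₀pos : 0 < u₀ ⬝ᵥ S *ᵥ u₀ := by
      have := hSpd.dotProduct_mulVec_pos hu₀
      simpa using this
    set c₀ : ℝ := u₀ ⬝ᵥ S *ᵥ u₀ with hc₀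
    have hlow : ∀ u : Fin n → ℝ, c₀ * ‖u‖^2 ≤ u ⬝ᵥ S *ᵥ u := by
      intro u
      rcases eq_or_ne u 0 with rfl | hu
      · simp
      · have hnu : 0 < ‖u‖ := norm_pos_iff.2 hu
        have hmem : ‖u‖⁻¹ • u ∈ Metric.sphere (0 : Fin n → ℝ) 1 := by
          simp [norm_smul, abs_of_pos (inv_pos.2 hnu), inv_mul_cancel₀ hnu.ne']
        have h1 := hu₀min _ hmem
        have h2 : (‖u‖⁻¹ • u) ⬝ᵥ S *ᵥ (‖u‖⁻¹ • u) = ‖u‖⁻¹ * (‖u‖⁻¹ * (u ⬝ᵥ S *ᵥ u)) := by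
          rw [mulVec_smul, smul_dotProduct, dotProduct_smul]
          simp [smul_eq_mul]
        rw [h2] at h1
        have h3 : c₀ * ‖u‖^2 ≤ (‖u‖⁻¹ * (‖u‖⁻¹ * (u ⬝ᵥ S *ᵥ u))) * ‖u‖^2 :=
          mul_le_mul_of_nonneg_right h1 (sq_nonneg _)
        have h4 : (‖u‖⁻¹ * (‖u‖⁻¹ * (u ⬝ᵥ S *ᵥ u))) * ‖u‖^2 = u ⬝ᵥ S *ᵥ u := by
          field_simp
        linarith
    -- pick δ from continuity of the entries at t₀
    have hη : 0 < c₀ / ((n:ℝ)^2 + 1) := by positivity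
    have hevent : ∀ᶠ s in 𝓝[Set.Icc (0:ℝ) T] t₀,
        ∀ i j, |P₁ s i j - P₁ t₀ i j| ≤ c₀ / ((n:ℝ)^2 + 1) := by
      have hcw : ContinuousWithinAt (fun t => (fun p : Fin n × Fin n => P₁ t p.1 p.2))
          (Set.Icc 0 T) t₀ :=
        (continuousOn_pi.2 fun p : Fin n × Fin n => hPc p.1 p.2).continuousWithinAt ht₀I
      have h2 := Metric.tendsto_nhds.mp hcw _ hη
      filter_upwards [h2] with s hs i j
      have h3 := dist_le_pi_dist (fun p : Fin n × Fin n => P₁ s p.1 p.2)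
        (fun p : Fin n × Fin n => P₁ t₀ p.1 p.2) (i, j)
      rw [Real.dist_eq] at h3
      exact le_trans h3 hs.le
    obtain ⟨δ, hδpos, hδ⟩ := Metric.mem_nhdsWithin_iff.1 hevent
    set δ' : ℝ := min (δ/2) t₀ with hδ'
    have hδ'pos : 0 < δ' := lt_min (by linarith) hpos
    have hδ't₀ : δ' ≤ t₀ := min_le_right _ _
    have hmemJ : t₀ - δ' ∈ J := by
      refine ⟨⟨by linarith, by linarith⟩, ?_⟩
      intro s hs v
      rcases le_or_gt t₀ s with hts | hst
      · exact claimIcc s ⟨hts, hs.2⟩ v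
      · have hsI : s ∈ Set.Icc (0:ℝ) T := ⟨by linarith [hs.1], hs.2⟩
        have hsball : s ∈ Metric.ball t₀ δ := by
          rw [Metric.mem_ball, Real.dist_eq, abs_of_nonpos (by linarith)]
          have h5 : t₀ - s ≤ δ' := by linarith [hs.1]
          have h6 : δ' ≤ δ/2 := min_le_left _ _
          linarith
        have hent := hδ ⟨hsball, hsI⟩
        have hdiff : |v ⬝ᵥ (P₁ s) *ᵥ v - v ⬝ᵥ (P₁ t₀) *ᵥ v|
            ≤ (n:ℝ)^2 * (c₀ / ((n:ℝ)^2 + 1)) * (‖v‖ * ‖v‖) := by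
          have hform : v ⬝ᵥ (P₁ s) *ᵥ v - v ⬝ᵥ (P₁ t₀) *ᵥ v = v ⬝ᵥ (P₁ s - P₁ t₀) *ᵥ v := by
            rw [sub_mulVec, dotProduct_sub]
          rw [hform]
          refine aux_quad_abs_le hη.le (P₁ s - P₁ t₀) (fun i j => ?_) v v
          simpa [Matrix.sub_apply] using hent i j
        have hexpmono : c * (v ⬝ᵥ v) ≤ ε * Real.exp (M*(T-s)) * (v ⬝ᵥ v) := by
          rw [hc]
          refine mul_le_mul_of_nonneg_right
            (mul_le_mul_of_nonneg_left (Real.exp_le_exp.2 ?_) hε.le) (aux_vv_nonneg v)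
          exact mul_le_mul_of_nonneg_left (by linarith) hM0.le
        have hSv := hlow v
        rw [hSq v] at hSv
        have hη2 : (n:ℝ)^2 * (c₀ / ((n:ℝ)^2 + 1)) ≤ c₀ := by
          rw [div_eq_mul_inv]
          rw [show (n:ℝ)^2 * (c₀ * ((n:ℝ)^2 + 1)⁻¹) = c₀ * ((n:ℝ)^2 * ((n:ℝ)^2 + 1)⁻¹) by ring]
          have h7 : (n:ℝ)^2 * ((n:ℝ)^2 + 1)⁻¹ ≤ 1 := by
            rw [mul_inv_le_iff₀ (by positivity)]
            linarith
          nlinarith [hc₀pos]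
        have h8 := (abs_le.1 hdiff).1
        have h9 : 0 ≤ (c₀ - (n:ℝ)^2 * (c₀ / ((n:ℝ)^2 + 1))) * (‖v‖ * ‖v‖) :=
          mul_nonneg (by linarith) (mul_nonneg (norm_nonneg _) (norm_nonneg _))
        have h10 : ‖v‖ * ‖v‖ = ‖v‖^2 := by ring
        nlinarith [aux_norm_sq_le v, hSv, hexpmono]
    have : t₀ ≤ t₀ - δ' := csInf_le hJbdd hmemJ
    linarith
  intro t ht v
  exact claimIcc t ⟨ht₀ ▸ ht.1, ht.2⟩ v

set_option maxHeartbeats 800000 in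
/-- Positive semidefiniteness of the solution of the backward Lyapunov equation (29):
if `Q_t` and `P_T` are symmetric positive semidefinite and `P₁` solves
`Ṗ₁ + Q + P₁A + AᵀP₁ + CᵀP₁C = 0` on `[0,T]` with `P₁(T) = P_T`, then `P₁(t)` is
positive semidefinite on `[0,T]`; consequently `Υ̃_t = R_t + D_tᵀP₁(t)D_t` is
symmetric positive semidefinite whenever each `R_t` is. -/
theorem lyapunov_solution_posSemidef
    (n m : ℕ) (hn : 0 < n) (hm : 0 < m) (T : ℝ) (hT : 0 < T)
    (A C Q : ℝ → Matrix (Fin n) (Fin n) ℝ)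
    (hA : ∀ i j, ContinuousOn (fun t => A t i j) (Set.Icc 0 T))
    (hC : ∀ i j, ContinuousOn (fun t => C t i j) (Set.Icc 0 T))
    (hQ : ∀ i j, ContinuousOn (fun t => Q t i j) (Set.Icc 0 T))
    (hQpsd : ∀ t ∈ Set.Icc (0:ℝ) T, (Q t).PosSemidef)
    (PT : Matrix (Fin n) (Fin n) ℝ) (hPT : PT.PosSemidef)
    (P₁ : ℝ → Matrix (Fin n) (Fin n) ℝ)
    (hreg : ∀ i j, ContDiffOn ℝ 1 (fun t => P₁ t i j) (Set.Icc 0 T))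
    (hode : ∀ t ∈ Set.Icc (0:ℝ) T, ∀ i j,
      HasDerivWithinAt (fun s => P₁ s i j)
        ((-(Q t + P₁ t * A t + (A t)ᵀ * P₁ t + (C t)ᵀ * P₁ t * C t)) i j)
        (Set.Icc 0 T) t)
    (hterm : P₁ T = PT) :
    (∀ t ∈ Set.Icc (0:ℝ) T, (P₁ t).PosSemidef) ∧
    (∀ (R : ℝ → Matrix (Fin m) (Fin m) ℝ) (D : ℝ → Matrix (Fin n) (Fin m) ℝ),
      (∀ t ∈ Set.Icc (0:ℝ) T, (R t).PosSemidef) →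
      ∀ t ∈ Set.Icc (0:ℝ) T, (R t + (D t)ᵀ * P₁ t * D t).PosSemidef) := by
  have hPc : ∀ i j, ContinuousOn (fun t => P₁ t i j) (Set.Icc 0 T) :=
    fun i j => (hreg i j).continuousOn
  obtain ⟨K₁, hK₁⟩ := (isCompact_Icc (a := (0:ℝ)) (b := T)).exists_bound_of_continuousOn
    (f := fun t (p : Fin n × Fin n) => A t p.1 p.2) (continuousOn_pi.2 fun p => hA p.1 p.2)
  obtain ⟨K₂, hK₂⟩ := (isCompact_Icc (a := (0:ℝ)) (b := T)).exists_bound_of_continuousOn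
    (f := fun t (p : Fin n × Fin n) => C t p.1 p.2) (continuousOn_pi.2 fun p => hC p.1 p.2)
  set K : ℝ := max 0 (max K₁ K₂) with hKdef
  have hK0 : 0 ≤ K := le_max_left _ _
  have hKA : ∀ t ∈ Set.Icc (0:ℝ) T, ∀ i j, |A t i j| ≤ K := by
    intro t ht i j
    have h2 := norm_le_pi_norm (fun p : Fin n × Fin n => A t p.1 p.2) (i, j)
    simp only [Real.norm_eq_abs] at h2
    exact le_trans (le_trans h2 (hK₁ t ht))
      (le_trans (le_max_left _ _) (le_max_right _ _))
  have hKC : ∀ t ∈ Set.Icc (0:ℝ) T, ∀ i j, |C t i j| ≤ K := by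
    intro t ht i j
    have h2 := norm_le_pi_norm (fun p : Fin n × Fin n => C t p.1 p.2) (i, j)
    simp only [Real.norm_eq_abs] at h2
    exact le_trans (le_trans h2 (hK₂ t ht))
      (le_trans (le_max_right _ _) (le_max_right _ _))
  have hQsym : ∀ t ∈ Set.Icc (0:ℝ) T, ∀ i j, Q t i j = Q t j i := by
    intro t ht i j
    have h := (hQpsd t ht).1
    have h2 := congrFun (congrFun h j) i
    simpa [Matrix.conjTranspose_apply] using h2
  have hPTsym : ∀ i j, P₁ T i j = P₁ T j i := by
    intro i j
    rw [hterm]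
    have h := hPT.1
    have h2 := congrFun (congrFun h j) i
    simpa [Matrix.conjTranspose_apply] using h2
  have hsym := aux_symm n hn T hT A C Q P₁ K hK0 hKA hKC hQsym hPc hode hPTsym
  have hPTpsd : (P₁ T).PosSemidef := hterm ▸ hPT
  have part1 : ∀ t ∈ Set.Icc (0:ℝ) T, (P₁ t).PosSemidef := by
    intro t ht
    have hherm : (P₁ t).IsHermitian := by
      show (P₁ t)ᴴ = P₁ t
      ext i j
      simp only [Matrix.conjTranspose_apply, star_trivial]
      exact hsym t ht j i
    refine PosSemidef.of_dotProduct_mulVec_nonneg hherm fun v => ?_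
    rw [star_trivial]
    by_contra hcon
    push_neg at hcon
    set B : ℝ := Real.exp ((2*(n:ℝ)^2*K + (n:ℝ)^3*K^2 + 1)*(T-t)) * (v ⬝ᵥ v) with hB
    have hB0 : 0 ≤ B := by
      rw [hB]
      have := aux_vv_nonneg v
      positivity
    have hq : v ⬝ᵥ (P₁ t) *ᵥ v < 0 := hcon
    set q : ℝ := v ⬝ᵥ (P₁ t) *ᵥ v with hqdef
    have hεp : 0 < (-q) / (2*(B+1)) := div_pos (neg_pos.2 hq) (by positivity)
    have hmain := aux_eps n hn T hT A C Q P₁ K hK0 hKA hKC hQpsd hPc hode hsym hPTpsd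
      ((-q) / (2*(B+1))) hεp t ht v
    have hassoc : (-q) / (2*(B+1)) * Real.exp ((2*(n:ℝ)^2*K + (n:ℝ)^3*K^2 + 1)*(T-t)) * (v ⬝ᵥ v)
        = (-q) / (2*(B+1)) * B := by
      rw [hB]; ring
    rw [hassoc] at hmain
    have hkey : (-q) / (2*(B+1)) * (2*(B+1)) = -q :=
      div_mul_cancel₀ _ (by positivity)
    nlinarith [mul_nonneg hεp.le hB0]
  refine ⟨part1, fun R D hR t ht => ?_⟩
  have h1 := (part1 t ht).conjTranspose_mul_mul_same (D t)
  rw [conjTranspose_eq_transpose_of_trivial] at h1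
  exact (hR t ht).add h1
end
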